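/- Hessian extra decay estimate for the wave equation inside a cone: suppose u: R × R^2 → R is smooth and -□u = F (with -□ = -∂_t^2 + Δ). Then there is an absolute constant C such that for all (t,x) with t ≥ 1 and |x| ≤ 3t and all α, β ∈ {0,1,2}, |∂_α ∂_β u(t,x)| ≤ C/(1+|t-|x||) · (Σ_{Γ ∈ {∂, L, Ω}} |∂Γ u| + |∂u|)(t,x) + C t/(1+|t-|x||) · |F(t,x)|, where |∂Γu| denotes the sum of |∂_{α'} Γ u| over all first derivatives ∂_{α'} and fields Γ in {∂_0, ∂_1, ∂_2, Ω, L_1, L_2}, and |∂u| = Σ_{α'} |∂_{α'} u|. -/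

import Mathlib

/-!
Differentiating `L_a u = x_a ∂_t u + t ∂_a u` gives
`t ∂_k ∂_a u = ∂_k L_a u - x_a ∂_k ∂_t u + O(|∂u|)`, which trades a spatial index for a time
index at the cost of a factor `|x| / t ≤ 3`. For `∂_t² u` these identities combine with the
equation into
`(t² - |x|²) ∂_t² u = t ∂_a L_a u - x_a ∂_t L_a u - t² F - 2t ∂_t u + x_a ∂_a u`,
and dividing by `t + |x|` gives `|t - |x|| |∂_t² u| ≲ |∂Γu| + |∂u| + t |F|`. Since
`⟨t - |x|⟩ ≲ t` in the cone, the first identity carries this gain to `∂_t ∂_a u` and then to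
`∂_b ∂_a u`.
-/

noncomputable section

/-- Partial derivative in the `i`-th coordinate on `ℝ^{1+2}` (coordinates `(t, x₁, x₂)`). -/
def pd (i : Fin 3) (u : (Fin 3 → ℝ) → ℝ) : (Fin 3 → ℝ) → ℝ :=
  fun p => fderiv ℝ u p (Pi.single i 1)

/-- The admissible vector fields: `∂_t, ∂_1, ∂_2`, the rotation `Ω = x₁∂₂ - x₂∂₁`,
and the boosts `L_1, L_2` with `L_a = x_a ∂_t + t ∂_a`. -/
def vf : Fin 6 → ((Fin 3 → ℝ) → ℝ) → ((Fin 3 → ℝ) → ℝ)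
  | 0 => pd 0
  | 1 => pd 1
  | 2 => pd 2
  | 3 => fun u p => p 1 * pd 2 u p - p 2 * pd 1 u p
  | 4 => fun u p => p 1 * pd 0 u p + p 0 * pd 1 u p
  | 5 => fun u p => p 2 * pd 0 u p + p 0 * pd 2 u p

variable {u g h : (Fin 3 → ℝ) → ℝ} {p : Fin 3 → ℝ}

lemma contDiff_pd (hu : ContDiff ℝ (⊤ : ℕ∞) u) (i : Fin 3) : ContDiff ℝ (⊤ : ℕ∞) (pd i u) :=
  (hu.fderiv_right le_rfl).clm_apply contDiff_const

lemma pd_pd_comm (hu : ContDiff ℝ (⊤ : ℕ∞) u) (i j : Fin 3) (p : Fin 3 → ℝ) :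
    pd i (pd j u) p = pd j (pd i u) p := by
  have hdiff : DifferentiableAt ℝ (fderiv ℝ u) p :=
    (hu.fderiv_right (m := (⊤ : ℕ∞)) le_rfl).differentiable (by simp) p
  have hpd (k l : Fin 3) :
      pd k (pd l u) p = fderiv ℝ (fderiv ℝ u) p (Pi.single k 1) (Pi.single l 1) := by
    change fderiv ℝ (fun q => fderiv ℝ u q (Pi.single l 1)) p (Pi.single k 1) = _
    simp [fderiv_clm_apply hdiff (differentiableAt_const _)]
  rw [hpd, hpd]
  exact hu.contDiffAt.isSymmSndFDerivAt
    (by simp only [minSmoothness_of_isRCLikeNormedField]; exact WithTop.coe_le_coe.mpr le_top) _ _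

lemma pd_add (hg : DifferentiableAt ℝ g p) (hh : DifferentiableAt ℝ h p) (k : Fin 3) :
    pd k (fun q => g q + h q) p = pd k g p + pd k h p := by
  simp [pd, fderiv_fun_add hg hh]

lemma pd_coord_mul (hg : DifferentiableAt ℝ g p) (a k : Fin 3) :
    pd k (fun q => q a * g q) p = (Pi.single k 1 : Fin 3 → ℝ) a * g p + p a * pd k g p := by
  rw [pd, fderiv_fun_mul (differentiableAt_apply a p) hg]
  simp [pd, fderiv_apply, add_comm, mul_comm]

/-- `boost a u` is `L_a u` for `a = 1, 2`, i.e. `vf 4 u` and `vf 5 u`. -/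
def boost (a : Fin 3) (u : (Fin 3 → ℝ) → ℝ) : (Fin 3 → ℝ) → ℝ :=
  fun q => q a * pd 0 u q + q 0 * pd a u q

lemma pd_boost (hu : ContDiff ℝ (⊤ : ℕ∞) u) (a k : Fin 3) (p : Fin 3 → ℝ) :
    pd k (boost a u) p = (Pi.single k 1 : Fin 3 → ℝ) a * pd 0 u p + p a * pd k (pd 0 u) p
      + ((Pi.single k 1 : Fin 3 → ℝ) 0 * pd a u p + p 0 * pd k (pd a u) p) := by
  have hdiff (i : Fin 3) : DifferentiableAt ℝ (pd i u) p :=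
    (contDiff_pd hu i).differentiable (by simp) p
  unfold boost
  rw [pd_add ((differentiableAt_apply a p).fun_mul (hdiff 0))
    ((differentiableAt_apply 0 p).fun_mul (hdiff a)), pd_coord_mul (hdiff 0),
    pd_coord_mul (hdiff a)]

lemma sq_sub_mul_pd_zero_pd_zero {F : (Fin 3 → ℝ) → ℝ} (hu : ContDiff ℝ (⊤ : ℕ∞) u)
    (hF : F p = -pd 0 (pd 0 u) p + pd 1 (pd 1 u) p + pd 2 (pd 2 u) p) :
    (p 0 ^ 2 - (p 1 ^ 2 + p 2 ^ 2)) * pd 0 (pd 0 u) p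
      = p 0 * pd 1 (boost 1 u) p + p 0 * pd 2 (boost 2 u) p - p 1 * pd 0 (boost 1 u) p
        - p 2 * pd 0 (boost 2 u) p - p 0 ^ 2 * F p - 2 * p 0 * pd 0 u p
        + p 1 * pd 1 u p + p 2 * pd 2 u p := by
  have e11 := pd_boost hu 1 1 p
  have e10 := pd_boost hu 1 0 p
  have e22 := pd_boost hu 2 2 p
  have e20 := pd_boost hu 2 0 p
  simp only [Pi.single_apply, Fin.isValue, Fin.reduceEq, reduceIte, one_mul, zero_mul,
    zero_add] at e11 e10 e22 e20
  rw [pd_pd_comm hu 1 0] at e11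
  rw [pd_pd_comm hu 2 0] at e22
  linear_combination -p 0 * e11 - p 0 * e22 + p 1 * e10 + p 2 * e20 + p 0 ^ 2 * hF

def radius (p : Fin 3 → ℝ) : ℝ := √(p 1 ^ 2 + p 2 ^ 2)

lemma sq_radius (p : Fin 3 → ℝ) : radius p ^ 2 = p 1 ^ 2 + p 2 ^ 2 :=
  Real.sq_sqrt (by positivity)

lemma abs_le_radius {a : Fin 3} (ha : a ≠ 0) (p : Fin 3 → ℝ) : |p a| ≤ radius p := by
  match a, ha with
  | 1, _ => exact Real.abs_le_sqrt (by nlinarith [sq_nonneg (p 2)])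
  | 2, _ => exact Real.abs_le_sqrt (by nlinarith [sq_nonneg (p 1)])

def lightConeWeight (p : Fin 3 → ℝ) : ℝ := 1 + |p 0 - radius p|

lemma lightConeWeight_pos (p : Fin 3 → ℝ) : 0 < lightConeWeight p := by
  unfold lightConeWeight
  positivity

lemma lightConeWeight_le (ht : 1 ≤ p 0) (hr : radius p ≤ 3 * p 0) :
    lightConeWeight p ≤ 5 * p 0 := by
  have hr0 : 0 ≤ radius p := Real.sqrt_nonneg _
  have : |p 0 - radius p| ≤ 4 * p 0 - 1 := abs_sub_le_iff.mpr ⟨by linarith, by linarith⟩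
  unfold lightConeWeight
  linarith

def absGrad (u : (Fin 3 → ℝ) → ℝ) (p : Fin 3 → ℝ) : ℝ := ∑ α : Fin 3, |pd α u p|

def absGradVF (u : (Fin 3 → ℝ) → ℝ) (p : Fin 3 → ℝ) : ℝ :=
  ∑ i : Fin 6, ∑ α : Fin 3, |pd α (vf i u) p|

section absGrad

variable (u : (Fin 3 → ℝ) → ℝ) (p : Fin 3 → ℝ)

lemma abs_pd_le_absGrad (k : Fin 3) : |pd k u p| ≤ absGrad u p :=
  Finset.single_le_sum (f := fun α => |pd α u p|) (fun _ _ => abs_nonneg _) (Finset.mem_univ k)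

lemma abs_pd_vf_le_absGradVF (i : Fin 6) (k : Fin 3) : |pd k (vf i u) p| ≤ absGradVF u p :=
  (Finset.single_le_sum (f := fun α => |pd α (vf i u) p|) (fun _ _ => abs_nonneg _)
    (Finset.mem_univ k)).trans
  (Finset.single_le_sum (f := fun i => ∑ α : Fin 3, |pd α (vf i u) p|)
    (fun _ _ => Finset.sum_nonneg fun _ _ => abs_nonneg _) (Finset.mem_univ i))

lemma absGrad_nonneg : 0 ≤ absGrad u p :=
  (abs_nonneg _).trans (abs_pd_le_absGrad u p 0)

lemma absGradVF_nonneg : 0 ≤ absGradVF u p :=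
  (abs_nonneg _).trans (abs_pd_vf_le_absGradVF u p 0 0)

lemma abs_pd_pd_le_absGradVF (k j : Fin 3) : |pd k (pd j u) p| ≤ absGradVF u p := by
  fin_cases j
  · exact abs_pd_vf_le_absGradVF u p 0 k
  · exact abs_pd_vf_le_absGradVF u p 1 k
  · exact abs_pd_vf_le_absGradVF u p 2 k

lemma abs_pd_boost_le_absGradVF {a : Fin 3} (ha : a ≠ 0) (k : Fin 3) :
    |pd k (boost a u) p| ≤ absGradVF u p := by
  match a, ha with
  | 1, _ => exact abs_pd_vf_le_absGradVF u p 4 k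
  | 2, _ => exact abs_pd_vf_le_absGradVF u p 5 k

end absGrad

lemma abs_single_mul_le {ι : Type*} [DecidableEq ι] (k a : ι) (y : ℝ) :
    |(Pi.single k 1 : ι → ℝ) a * y| ≤ |y| := by
  rw [abs_mul]
  refine mul_le_of_le_one_left (abs_nonneg y) ?_
  rcases eq_or_ne a k with rfl | h <;> simp [*]

lemma abs_mul_le_of_abs_le {c y B : ℝ} (hy : |y| ≤ B) : |c * y| ≤ |c| * B := by
  rw [abs_mul]
  exact mul_le_mul_of_nonneg_left hy (abs_nonneg c)

lemma abs_mul_abs_pd_pd_le (hu : ContDiff ℝ (⊤ : ℕ∞) u) {a : Fin 3} (ha : a ≠ 0) (k : Fin 3) :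
    |p 0| * |pd k (pd a u) p|
      ≤ absGradVF u p + 2 * absGrad u p + |p a| * |pd k (pd 0 u) p| := by
  have h1 := abs_single_mul_le k a (pd 0 u p)
  have h2 := abs_single_mul_le k 0 (pd a u p)
  have h3 := abs_mul (p a) (pd k (pd 0 u) p)
  have hL := abs_pd_boost_le_absGradVF u p ha k
  have hP0 := abs_pd_le_absGrad u p 0
  have hPa := abs_pd_le_absGrad u p a
  rw [← abs_mul, show p 0 * pd k (pd a u) p = pd k (boost a u) p
    - (Pi.single k 1 : Fin 3 → ℝ) a * pd 0 u p - p a * pd k (pd 0 u) p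
    - (Pi.single k 1 : Fin 3 → ℝ) 0 * pd a u p by rw [pd_boost hu]; ring, abs_le]
  constructor <;> linarith [abs_le.mp h1, abs_le.mp h2, abs_le.mp hL,
    le_abs_self (p a * pd k (pd 0 u) p), neg_abs_le (p a * pd k (pd 0 u) p)]

lemma abs_sq_sub_mul_abs_pd_zero_pd_zero_le {F : (Fin 3 → ℝ) → ℝ}
    (hu : ContDiff ℝ (⊤ : ℕ∞) u)
    (hF : F p = -pd 0 (pd 0 u) p + pd 1 (pd 1 u) p + pd 2 (pd 2 u) p) :
    |p 0 ^ 2 - (p 1 ^ 2 + p 2 ^ 2)| * |pd 0 (pd 0 u) p|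
      ≤ 2 * (|p 0| + radius p) * (absGradVF u p + absGrad u p) + p 0 ^ 2 * |F p| := by
  have hr1 := abs_le_radius one_ne_zero p
  have hr2 := abs_le_radius (by decide : (2 : Fin 3) ≠ 0) p
  have hΓ := absGradVF_nonneg u p
  have hP := absGrad_nonneg u p
  have hL (a : Fin 3) (ha : a ≠ 0) (k : Fin 3) := abs_pd_boost_le_absGradVF u p ha k
  have hg (k : Fin 3) := abs_pd_le_absGrad u p k
  have b1 := abs_mul_le_of_abs_le (c := p 0) (hL 1 one_ne_zero 1)
  have b2 := abs_mul_le_of_abs_le (c := p 0) (hL 2 (by decide) 2)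
  have b3 := abs_mul_le_of_abs_le (c := p 1) (hL 1 one_ne_zero 0)
  have b4 := abs_mul_le_of_abs_le (c := p 2) (hL 2 (by decide) 0)
  have b5 := abs_mul_le_of_abs_le (c := p 0 ^ 2) (le_refl |F p|)
  have b6 := abs_mul_le_of_abs_le (c := 2 * p 0) (hg 0)
  have b7 := abs_mul_le_of_abs_le (c := p 1) (hg 1)
  have b8 := abs_mul_le_of_abs_le (c := p 2) (hg 2)
  rw [abs_pow, sq_abs] at b5
  rw [abs_mul 2 (p 0), abs_two] at b6
  rw [← abs_mul, sq_sub_mul_pd_zero_pd_zero hu hF, abs_le]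
  constructor <;> linarith [abs_le.mp b1, abs_le.mp b2, abs_le.mp b3, abs_le.mp b4,
    abs_le.mp b5, abs_le.mp b6, abs_le.mp b7, abs_le.mp b8,
    mul_le_mul_of_nonneg_right hr1 hΓ, mul_le_mul_of_nonneg_right hr2 hΓ,
    mul_le_mul_of_nonneg_right hr1 hP, mul_le_mul_of_nonneg_right hr2 hP]

lemma abs_sub_radius_mul_abs_pd_zero_pd_zero_le {F : (Fin 3 → ℝ) → ℝ}
    (hu : ContDiff ℝ (⊤ : ℕ∞) u) (ht : 0 < p 0)
    (hF : F p = -pd 0 (pd 0 u) p + pd 1 (pd 1 u) p + pd 2 (pd 2 u) p) :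
    |p 0 - radius p| * |pd 0 (pd 0 u) p|
      ≤ 2 * (absGradVF u p + absGrad u p) + p 0 * |F p| := by
  have hr0 : 0 ≤ radius p := Real.sqrt_nonneg _
  have hfactor : |p 0 ^ 2 - (p 1 ^ 2 + p 2 ^ 2)| = (p 0 + radius p) * |p 0 - radius p| := by
    rw [← sq_radius, sq_sub_sq, abs_mul, abs_of_nonneg (by linarith : 0 ≤ p 0 + radius p)]
  have h := abs_sq_sub_mul_abs_pd_zero_pd_zero_le hu hF
  rw [hfactor, abs_of_pos ht, mul_assoc] at h
  refine le_of_mul_le_mul_left (h.trans ?_) (by linarith : 0 < p 0 + radius p)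
  nlinarith [mul_nonneg (mul_nonneg hr0 ht.le) (abs_nonneg (F p))]

lemma mul_le_of_mul_le_add_mul {t H X A B D c : ℝ} (ht : 0 < t) (hH : 0 ≤ H) (hHt : H ≤ c * t)
    (hA : 0 ≤ A) (h : t * X ≤ A + B * (t * D)) : H * X ≤ c * A + B * (H * D) := by
  have : t * (H * X) ≤ t * (c * A + B * (H * D)) := by
    nlinarith [mul_le_mul_of_nonneg_left h hH, mul_le_mul_of_nonneg_right hHt hA]
  exact le_of_mul_le_mul_left this ht

lemma lightConeWeight_mul_abs_pd_zero_pd_zero_le {F : (Fin 3 → ℝ) → ℝ}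
    (hu : ContDiff ℝ (⊤ : ℕ∞) u) (ht : 0 < p 0)
    (hF : F p = -pd 0 (pd 0 u) p + pd 1 (pd 1 u) p + pd 2 (pd 2 u) p) :
    lightConeWeight p * |pd 0 (pd 0 u) p| ≤ 3 * (absGradVF u p + absGrad u p + p 0 * |F p|) := by
  have h := abs_sub_radius_mul_abs_pd_zero_pd_zero_le hu ht hF
  have := abs_pd_pd_le_absGradVF u p 0 0
  have := absGrad_nonneg u p
  have := mul_nonneg ht.le (abs_nonneg (F p))
  unfold lightConeWeight
  linarith

lemma lightConeWeight_mul_abs_pd_pd_le_of_ne (hu : ContDiff ℝ (⊤ : ℕ∞) u) (ht : 1 ≤ p 0)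
    (hr : radius p ≤ 3 * p 0) {a : Fin 3} (ha : a ≠ 0) (k : Fin 3) :
    lightConeWeight p * |pd k (pd a u) p|
      ≤ 10 * (absGradVF u p + absGrad u p) + 3 * (lightConeWeight p * |pd k (pd 0 u) p|) := by
  have h := abs_mul_abs_pd_pd_le (p := p) hu ha k
  have hD : |p a| * |pd k (pd 0 u) p| ≤ 3 * (p 0 * |pd k (pd 0 u) p|) := by
    rw [← mul_assoc]
    exact mul_le_mul_of_nonneg_right ((abs_le_radius ha p).trans hr) (abs_nonneg _)
  rw [abs_of_pos (by linarith)] at h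
  have hΓ := absGradVF_nonneg u p
  have hP := absGrad_nonneg u p
  have := mul_le_of_mul_le_add_mul (A := absGradVF u p + 2 * absGrad u p) (B := 3)
    (D := |pd k (pd 0 u) p|) (by linarith) (lightConeWeight_pos p).le (lightConeWeight_le ht hr)
    (by linarith) (h.trans (by linarith))
  linarith

lemma lightConeWeight_mul_abs_pd_pd_zero_le {F : (Fin 3 → ℝ) → ℝ}
    (hu : ContDiff ℝ (⊤ : ℕ∞) u) (ht : 1 ≤ p 0) (hr : radius p ≤ 3 * p 0)
    (hF : F p = -pd 0 (pd 0 u) p + pd 1 (pd 1 u) p + pd 2 (pd 2 u) p) (k : Fin 3) :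
    lightConeWeight p * |pd k (pd 0 u) p|
      ≤ 19 * (absGradVF u p + absGrad u p + p 0 * |F p|) := by
  have h00 := lightConeWeight_mul_abs_pd_zero_pd_zero_le hu (by linarith) hF
  have := mul_nonneg (by linarith : 0 ≤ p 0) (abs_nonneg (F p))
  have := absGradVF_nonneg u p
  have := absGrad_nonneg u p
  rcases eq_or_ne k 0 with rfl | hk
  · linarith
  · rw [pd_pd_comm hu]
    linarith [lightConeWeight_mul_abs_pd_pd_le_of_ne hu ht hr hk 0]

lemma lightConeWeight_mul_abs_pd_pd_le {F : (Fin 3 → ℝ) → ℝ}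
    (hu : ContDiff ℝ (⊤ : ℕ∞) u) (ht : 1 ≤ p 0) (hr : radius p ≤ 3 * p 0)
    (hF : F p = -pd 0 (pd 0 u) p + pd 1 (pd 1 u) p + pd 2 (pd 2 u) p) (k a : Fin 3) :
    lightConeWeight p * |pd k (pd a u) p|
      ≤ 67 * (absGradVF u p + absGrad u p + p 0 * |F p|) := by
  have hk0 := lightConeWeight_mul_abs_pd_pd_zero_le hu ht hr hF k
  have := mul_nonneg (by linarith : 0 ≤ p 0) (abs_nonneg (F p))
  have := absGradVF_nonneg u p
  have := absGrad_nonneg u p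
  rcases eq_or_ne a 0 with rfl | ha
  · linarith
  · linarith [lightConeWeight_mul_abs_pd_pd_le_of_ne hu ht hr ha k]

/-- Extra decay for the Hessian of a wave component: if `-□u = F`
(with `-□ = -∂_t² + Δ`) then, in the region `{t ≥ 1, |x| ≤ 3t}`,
`|∂∂u| ≲ ⟨t-r⟩⁻¹ (|∂Γu| + |∂u|) + t ⟨t-r⟩⁻¹ |F|`. -/
theorem hessian_extra_decay :
    ∃ C : ℝ, 0 < C ∧ ∀ (u F : (Fin 3 → ℝ) → ℝ), ContDiff ℝ (⊤ : ℕ∞) u →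
      (∀ p, F p = -pd 0 (pd 0 u) p + pd 1 (pd 1 u) p + pd 2 (pd 2 u) p) →
      ∀ p : Fin 3 → ℝ, 1 ≤ p 0 → Real.sqrt ((p 1) ^ 2 + (p 2) ^ 2) ≤ 3 * p 0 →
      ∀ α β : Fin 3,
        |pd α (pd β u) p| ≤
          C / (1 + |p 0 - Real.sqrt ((p 1) ^ 2 + (p 2) ^ 2)|) *
            ((∑ i : Fin 6, ∑ α' : Fin 3, |pd α' (vf i u) p|) +
              ∑ α' : Fin 3, |pd α' u p|)
          + C * p 0 / (1 + |p 0 - Real.sqrt ((p 1) ^ 2 + (p 2) ^ 2)|) * |F p| := by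
  refine ⟨67, by norm_num, fun u F hu hF p ht hr α β => ?_⟩
  change |pd α (pd β u) p| ≤ 67 / lightConeWeight p * (absGradVF u p + absGrad u p)
    + 67 * p 0 / lightConeWeight p * |F p|
  rw [div_mul_eq_mul_div, div_mul_eq_mul_div, ← add_div, le_div_iff₀ (lightConeWeight_pos p)]
  linarith [lightConeWeight_mul_abs_pd_pd_le hu ht hr (hF p) α β]
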